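/- arXiv:2512.00703 — 3 statements merged into one kernel-verified Lean document; each statement's English description precedes it below -/
import Mathlib

section
/- Let (X, d, μ) be an irreversible metric measure space with probability measure μ and let β be a non-negative decreasing function on (0,∞). If for every 1-Lipschitz function f and every r > 0 one has μ({x : |f(x) − ∫ f dμ| ≥ r}) ≤ β(r), then for every Borel set A with μ(A) > 0 and every r > 0, 1 − μ(B⁺(A,r)) ≤ β(μ(A)·r) and 1 − μ(B⁻(A,r)) ≤ β(μ(A)·r). In particular α_μ(r) ≤ β(r/2) for every r > 0. -/
open MeasureTheory Real Set Filter

noncomputable section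

/-- Forward open `r`-neighborhood `B⁺(A,r)` in an irreversible metric space. -/
def Bplus {X : Type*} (d : X → X → ℝ) (A : Set X) (r : ℝ) : Set X :=
  {x | ∃ z ∈ A, d z x < r}

/-- Backward open `r`-neighborhood `B⁻(A,r)` in an irreversible metric space. -/
def Bminus {X : Type*} (d : X → X → ℝ) (A : Set X) (r : ℝ) : Set X :=
  {x | ∃ z ∈ A, d x z < r}

/-- `d` is an irreversible metric: nonnegative, vanishing exactly on the
diagonal, and satisfying the triangle inequality (no symmetry assumed). -/
def IsIrrevMetric {X : Type*} (d : X → X → ℝ) : Prop :=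
  (∀ x y, 0 ≤ d x y) ∧ (∀ x y, d x y = 0 ↔ x = y) ∧ (∀ x y z, d x z ≤ d x y + d y z)

/-- The concentration function `α_μ(r)` of an irreversible metric measure space. -/
def concFn {X : Type*} [MeasurableSpace X] (μ : Measure X) (d : X → X → ℝ) (r : ℝ) : ℝ :=
  sSup {v | ∃ A : Set X, MeasurableSet A ∧ 1 / 2 ≤ (μ A).toReal ∧
    v = 1 - min ((μ (Bplus d A r)).toReal) ((μ (Bminus d A r)).toReal)}


/-!
Apply the tail bound to `f = min (d(A, ·)) r`. It vanishes on `A` and is at most `r`, so its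
mean is at most `r (1 - μ(A))`; outside `B⁺(A,r)` it equals `r`, hence exceeds its mean by at
least `μ(A) r`. The backward neighbourhood is the forward one of the reversed metric, and the
tail hypothesis survives reversing `d` by passing from `f` to `-f`. Finally `μ(A) ≥ 1/2` and
monotonicity of `β` give `β(μ(A) r) ≤ β(r/2)`.
-/

def HasMeanTailBound {X : Type*} [MeasurableSpace X] (μ : Measure X) (d : X → X → ℝ)
    (β : ℝ → ℝ) : Prop :=
  ∀ f : X → ℝ, (∀ x z, f z - f x ≤ d x z) →
    ∀ r > 0, μ.real {x | r ≤ |f x - ∫ y, f y ∂μ|} ≤ β r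

theorem HasMeanTailBound.flip {X : Type*} [MeasurableSpace X] {μ : Measure X}
    {d : X → X → ℝ} {β : ℝ → ℝ} (h : HasMeanTailBound μ d β) :
    HasMeanTailBound μ (flip d) β := by
  intro f hf r hr
  have hneg : ∀ x z, (-f) z - (-f) x ≤ d x z := fun x z => by
    simp only [Pi.neg_apply, neg_sub_neg]
    exact hf z x
  simpa only [Pi.neg_apply, integral_neg, neg_sub_neg, abs_sub_comm] using h (-f) hneg r hr

section IrreversibleMetric

variable {X : Type*} {d : X → X → ℝ}

theorem IsIrrevMetric.flip (hd : IsIrrevMetric d) : IsIrrevMetric (flip d) :=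
  ⟨fun x y => hd.1 y x, fun x y => (hd.2.1 y x).trans eq_comm,
    fun x y z => (hd.2.2 z y x).trans_eq (add_comm _ _)⟩

theorem Bplus_flip (A : Set X) (r : ℝ) : Bplus (flip d) A r = Bminus d A r := rfl

/-- `d(A, x)`; it is `0` for `A = ∅`, as `sInf ∅ = 0` in `ℝ`. -/
def distFrom (d : X → X → ℝ) (A : Set X) (x : X) : ℝ :=
  sInf ((fun z => d z x) '' A)

variable {A : Set X}

theorem distFrom_nonneg (hd₀ : ∀ x y, 0 ≤ d x y) (x : X) : 0 ≤ distFrom d A x :=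
  Real.sInf_nonneg <| by rintro _ ⟨z, -, rfl⟩; exact hd₀ z x

theorem distFrom_le (hd₀ : ∀ x y, 0 ≤ d x y) {x z : X} (hz : z ∈ A) :
    distFrom d A x ≤ d z x :=
  csInf_le ⟨0, by rintro _ ⟨w, -, rfl⟩; exact hd₀ w x⟩ ⟨z, hz, rfl⟩

theorem distFrom_eq_zero_of_mem (hd₀ : ∀ x y, 0 ≤ d x y) (hd_self : ∀ x, d x x = 0)
    {x : X} (hx : x ∈ A) : distFrom d A x = 0 :=
  le_antisymm ((distFrom_le hd₀ hx).trans_eq (hd_self x)) (distFrom_nonneg hd₀ x)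

theorem distFrom_sub_distFrom_le (hd₀ : ∀ x y, 0 ≤ d x y)
    (hd_tri : ∀ x y z, d x z ≤ d x y + d y z) (x z : X) :
    distFrom d A z - distFrom d A x ≤ d x z := by
  rcases A.eq_empty_or_nonempty with rfl | hA
  · simpa [distFrom] using hd₀ x z
  rw [sub_le_comm]
  refine le_csInf (hA.image _) ?_
  rintro _ ⟨w, hw, rfl⟩
  linarith [distFrom_le (x := z) hd₀ hw, hd_tri w x z]

theorem le_distFrom_of_notMem_Bplus (hA : A.Nonempty) {r : ℝ} {x : X}
    (hx : x ∉ Bplus d A r) : r ≤ distFrom d A x :=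
  le_csInf (hA.image _) <| by
    rintro _ ⟨z, hz, rfl⟩
    exact not_lt.mp fun h => hx ⟨z, hz, h⟩

theorem min_sub_min_le_of_sub_le (hd₀ : ∀ x y, 0 ≤ d x y) {f : X → ℝ}
    (hf : ∀ x z, f z - f x ≤ d x z) (r : ℝ) (x z : X) :
    min (f z) r - min (f x) r ≤ d x z := by
  have : min (f z) r ≤ min (f x + d x z) (r + d x z) :=
    min_le_min (by linarith [hf x z]) (by linarith [hd₀ x z])
  rw [min_add_add_right] at this
  linarith

end IrreversibleMetric

section Concentration

variable {X : Type*} [MeasurableSpace X] {μ : Measure X} [IsProbabilityMeasure μ]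

theorem one_sub_measureReal_le_measureReal_compl (B : Set X) : 1 - μ.real B ≤ μ.real Bᶜ := by
  have := measureReal_union_le (μ := μ) B Bᶜ
  rw [union_compl_self, probReal_univ] at this
  linarith

theorem one_sub_measureReal_le_of_zero_on_of_eq_off {A B : Set X} (hA : MeasurableSet A)
    {f : X → ℝ} {r : ℝ} (hf₀ : ∀ x, 0 ≤ f x) (hfr : ∀ x, f x ≤ r)
    (hfA : ∀ x ∈ A, f x = 0) (hfB : ∀ x ∉ B, f x = r) :
    1 - μ.real B ≤ μ.real {x | μ.real A * r ≤ |f x - ∫ y, f y ∂μ|} := by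
  have hf_le : ∀ x, f x ≤ Aᶜ.indicator (fun _ => r) x := by
    intro x
    by_cases hx : x ∈ A
    · simp [hx, hfA x hx]
    · simpa [hx] using hfr x
  have hmean : ∫ y, f y ∂μ ≤ r * (1 - μ.real A) := by
    calc ∫ y, f y ∂μ ≤ ∫ y, Aᶜ.indicator (fun _ => r) y ∂μ :=
          integral_mono_of_nonneg (.of_forall hf₀) ((integrable_const r).indicator hA.compl)
            (.of_forall hf_le)
      _ = r * (1 - μ.real A) := by
          rw [integral_indicator_const _ hA.compl, probReal_compl_eq_one_sub hA, smul_eq_mul,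
            mul_comm]
  have hsub : Bᶜ ⊆ {x | μ.real A * r ≤ |f x - ∫ y, f y ∂μ|} := by
    intro x hx
    have : μ.real A * r ≤ f x - ∫ y, f y ∂μ := by rw [hfB x hx]; linarith
    exact this.trans (le_abs_self _)
  exact (one_sub_measureReal_le_measureReal_compl B).trans (measureReal_mono hsub)

theorem one_sub_measureReal_Bplus_le {d : X → X → ℝ} (hd : IsIrrevMetric d) {β : ℝ → ℝ}
    (h : HasMeanTailBound μ d β) {A : Set X} (hA : MeasurableSet A) (hA₀ : 0 < μ.real A)
    {r : ℝ} (hr : 0 < r) : 1 - μ.real (Bplus d A r) ≤ β (μ.real A * r) := by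
  obtain ⟨hd₀, hd_eq, hd_tri⟩ := hd
  have hA_ne : A.Nonempty := 
    nonempty_iff_ne_empty.2 fun hA_empty => by simp [hA_empty] at hA₀
  let f x := min (distFrom d A x) r
  refine (one_sub_measureReal_le_of_zero_on_of_eq_off hA (f := f)
    (fun x => le_min (distFrom_nonneg hd₀ x) hr.le) (fun x => min_le_right _ _)
    (fun x hx => by simp [f, distFrom_eq_zero_of_mem hd₀ (fun x => (hd_eq x x).2 rfl) hx, hr.le])
    (fun x hx => min_eq_right (le_distFrom_of_notMem_Bplus hA_ne hx))).trans ?_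
  exact h f (min_sub_min_le_of_sub_le hd₀ (distFrom_sub_distFrom_le hd₀ hd_tri) r) _
    (mul_pos hA₀ hr)

theorem concFn_le {d : X → X → ℝ} {r b : ℝ}
    (h : ∀ A, MeasurableSet A → 1 / 2 ≤ μ.real A →
      1 - μ.real (Bplus d A r) ≤ b ∧ 1 - μ.real (Bminus d A r) ≤ b) :
    concFn μ d r ≤ b := by
  refine csSup_le ⟨_, univ, .univ, by norm_num, rfl⟩ ?_
  rintro _ ⟨A, hA, hA_half, rfl⟩
  obtain ⟨hplus, hminus⟩ := h A hA hA_half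
  exact sub_le_comm.mp (le_min (sub_le_comm.mp hplus) (sub_le_comm.mp hminus))

end Concentration

theorem neighborhood_bound_of_mean_tail_general {X : Type*} [MeasurableSpace X] (d : X → X → ℝ)
    (hd : IsIrrevMetric d) (μ : Measure X) [IsProbabilityMeasure μ]
    (β : ℝ → ℝ) (hβmono : AntitoneOn β (Ioi 0))
    (h : ∀ f : X → ℝ, (∀ x z, f z - f x ≤ d x z) →
      ∀ r > 0, (μ {x | r ≤ |f x - ∫ y, f y ∂μ|}).toReal ≤ β r) :
    (∀ A : Set X, MeasurableSet A → 0 < (μ A).toReal → ∀ r > 0,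
      1 - (μ (Bplus d A r)).toReal ≤ β ((μ A).toReal * r) ∧
      1 - (μ (Bminus d A r)).toReal ≤ β ((μ A).toReal * r)) ∧
    (∀ r > 0, concFn μ d r ≤ β (r / 2)) := by
  have h : HasMeanTailBound μ d β := h
  have neighborhoods : ∀ A : Set X, MeasurableSet A → 0 < μ.real A → ∀ r > 0,
      1 - μ.real (Bplus d A r) ≤ β (μ.real A * r) ∧
      1 - μ.real (Bminus d A r) ≤ β (μ.real A * r) := fun A hA hA₀ r hr =>
    ⟨one_sub_measureReal_Bplus_le hd h hA hA₀ hr,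
      Bplus_flip (d := d) A r ▸ one_sub_measureReal_Bplus_le hd.flip h.flip hA hA₀ hr⟩
  refine ⟨neighborhoods, fun r hr => concFn_le fun A hA hA_half => ?_⟩
  have hA₀ : 0 < μ.real A := by linarith
  have hβ : β (μ.real A * r) ≤ β (r / 2) :=
    hβmono (by simp [hr]) (mul_pos hA₀ hr) (by nlinarith)
  exact (neighborhoods A hA hA₀ r hr).imp (·.trans hβ) (·.trans hβ)

theorem neighborhood_bound_of_mean_tail {X : Type*} [MeasurableSpace X] (d : X → X → ℝ)
    (hd : IsIrrevMetric d) (μ : Measure X) [IsProbabilityMeasure μ]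
    (β : ℝ → ℝ) (hβ0 : ∀ r > 0, 0 ≤ β r) (hβmono : AntitoneOn β (Ioi 0))
    (h : ∀ f : X → ℝ, (∀ x z, f z - f x ≤ d x z) →
      ∀ r > 0, (μ {x | r ≤ |f x - ∫ y, f y ∂μ|}).toReal ≤ β r) :
    (∀ A : Set X, MeasurableSet A → 0 < (μ A).toReal → ∀ r > 0,
      1 - (μ (Bplus d A r)).toReal ≤ β ((μ A).toReal * r) ∧
      1 - (μ (Bminus d A r)).toReal ≤ β ((μ A).toReal * r)) ∧
    (∀ r > 0, concFn μ d r ≤ β (r / 2)) :=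
  neighborhood_bound_of_mean_tail_general d hd μ β hβmono h
end
end

section
/- Let μ be a probability measure on a measurable space X, f : X → ℝ measurable, and suppose there are constants C, c > 0 and p ∈ (0,∞) such that μ({x : |f(x) − ∫ f dμ| ≥ r + β̄}) ≤ C e^{−c r^p} for all r > 0, where β̄ ≤ C c^{−1/p} Γ(1/p + 1). Then for every r > 0, μ({x : |f(x) − ∫ f dμ| ≥ r}) ≤ C' e^{−κ_p c r^p}, where C' := max(C,1) · e^{𝔠_p^p C^p} with 𝔠_p := Γ(1/p + 1), and κ_p := min(1, 2^{1−p}). -/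
open MeasureTheory Real Set Filter

noncomputable section

lemma aux_min_rpow {a b p : ℝ} (ha : 0 ≤ a) (hb : 0 ≤ b) (hp : 0 < p) :
    min 1 (2 ^ (1 - p)) * (a + b) ^ p ≤ a ^ p + b ^ p := by
  rcases le_or_gt p 1 with h1 | h1
  · have hmin : min (1:ℝ) (2 ^ (1 - p)) = 1 := by
      apply min_eq_left
      exact Real.one_le_rpow one_le_two (by linarith)
    rw [hmin, one_mul]
    have := NNReal.rpow_add_le_add_rpow a.toNNReal b.toNNReal hp.le h1
    have h := NNReal.coe_le_coe.2 this
    push_cast [NNReal.coe_rpow, Real.coe_toNNReal _ ha, Real.coe_toNNReal _ hb,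
      Real.coe_toNNReal _ (add_nonneg ha hb)] at h
    simpa using h
  · have hmin : min (1:ℝ) (2 ^ (1 - p)) = 2 ^ (1 - p) := by
      apply min_eq_right
      exact Real.rpow_le_one_of_one_le_of_nonpos one_le_two (by linarith)
    have key := NNReal.rpow_add_le_mul_rpow_add_rpow a.toNNReal b.toNNReal h1.le
    have h := NNReal.coe_le_coe.2 key
    push_cast [NNReal.coe_rpow, Real.coe_toNNReal _ ha, Real.coe_toNNReal _ hb] at h
    have h2 : (a + b) ^ p ≤ 2 ^ (p - 1) * (a ^ p + b ^ p) := by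
      simpa [Real.coe_toNNReal _ (add_nonneg ha hb)] using h
    rw [hmin]
    calc (2:ℝ) ^ (1 - p) * (a + b) ^ p ≤ 2 ^ (1 - p) * (2 ^ (p - 1) * (a ^ p + b ^ p)) := by
          exact mul_le_mul_of_nonneg_left h2 (Real.rpow_nonneg (by norm_num) _)
      _ = (2 ^ (1 - p) * 2 ^ (p - 1)) * (a ^ p + b ^ p) := by ring
      _ = a ^ p + b ^ p := by
          rw [← Real.rpow_add (by norm_num)]
          norm_num


theorem tail_exp_of_shifted_tail {X : Type*} [MeasurableSpace X]
    (μ : Measure X) [IsProbabilityMeasure μ] (f : X → ℝ) (hf : Measurable f)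
    (C c p : ℝ) (hC : 0 < C) (hc : 0 < c) (hp : 0 < p)
    (βb : ℝ) (hβb0 : 0 ≤ βb) (hβb : βb ≤ C * c ^ (-(1 : ℝ) / p) * Real.Gamma (1 / p + 1))
    (htail : ∀ r > 0,
      (μ {x | r + βb ≤ |f x - ∫ y, f y ∂μ|}).toReal ≤ C * Real.exp (-c * r ^ p)) :
    ∀ r > 0, (μ {x | r ≤ |f x - ∫ y, f y ∂μ|}).toReal ≤
      (max C 1 * Real.exp ((Real.Gamma (1 / p + 1)) ^ p * C ^ p)) *
        Real.exp (-(min 1 (2 ^ (1 - p)) * c) * r ^ p) := by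
  
  intro r hr
  set cp := Real.Gamma (1 / p + 1) with hcpdef
  have hcp : 0 < cp := Real.Gamma_pos_of_pos (by positivity)
  have hβbp : c * βb ^ p ≤ cp ^ p * C ^ p := by
    have h1 : βb ^ p ≤ (C * c ^ (-(1 : ℝ) / p) * cp) ^ p :=
      Real.rpow_le_rpow hβb0 hβb hp.le
    have h2 : (C * c ^ (-(1 : ℝ) / p) * cp) ^ p = C ^ p * c⁻¹ * cp ^ p := by
      rw [Real.mul_rpow (by positivity) hcp.le, Real.mul_rpow hC.le (by positivity),
        ← Real.rpow_mul hc.le]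
      have : (-(1 : ℝ) / p) * p = -1 := by field_simp
      rw [this, Real.rpow_neg_one]
    have h3 : c * βb ^ p ≤ c * (C ^ p * c⁻¹ * cp ^ p) :=
      mul_le_mul_of_nonneg_left (h2 ▸ h1) hc.le
    calc c * βb ^ p ≤ c * (C ^ p * c⁻¹ * cp ^ p) := h3
      _ = (c * c⁻¹) * (C ^ p * cp ^ p) := by ring
      _ = cp ^ p * C ^ p := by rw [mul_inv_cancel₀ hc.ne']; ring
  have hμ1 : (μ {x | r ≤ |f x - ∫ y, f y ∂μ|}).toReal ≤ 1 := by
    have h := measure_mono (subset_univ {x | r ≤ |f x - ∫ y, f y ∂μ|}) (μ := μ)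
    have := ENNReal.toReal_mono (by simp) h
    simpa using this
  have hκ1 : min (1 : ℝ) (2 ^ (1 - p)) ≤ 1 := min_le_left _ _
  have hκ0 : 0 ≤ min (1 : ℝ) (2 ^ (1 - p)) := le_min one_pos.le (by positivity)
  rcases le_or_gt r βb with hle | hlt
  · calc (μ {x | r ≤ |f x - ∫ y, f y ∂μ|}).toReal ≤ 1 := hμ1
      _ ≤ max C 1 * Real.exp (cp ^ p * C ^ p) * Real.exp (-(min 1 (2 ^ (1 - p)) * c) * r ^ p) := by
          have hexp : (1 : ℝ) ≤ Real.exp (cp ^ p * C ^ p) * Real.exp (-(min 1 (2 ^ (1 - p)) * c) * r ^ p) := by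
            rw [← Real.exp_add]
            apply Real.one_le_exp
            have hr1 : r ^ p ≤ βb ^ p := Real.rpow_le_rpow hr.le hle hp.le
            have h4 : min 1 (2 ^ (1 - p)) * c * r ^ p ≤ c * βb ^ p := by
              have hrp : (0:ℝ) ≤ c * r ^ p := by positivity
              have h5 : min 1 (2 ^ (1 - p)) * (c * r ^ p) ≤ 1 * (c * r ^ p) :=
                mul_le_mul_of_nonneg_right hκ1 hrp
              have h6 := mul_le_mul_of_nonneg_left hr1 hc.le
              nlinarith
            nlinarith
          calc (1 : ℝ) ≤ 1 * (Real.exp (cp ^ p * C ^ p) * Real.exp (-(min 1 (2 ^ (1 - p)) * c) * r ^ p)) := by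
                linarith
            _ ≤ max C 1 * (Real.exp (cp ^ p * C ^ p) * Real.exp (-(min 1 (2 ^ (1 - p)) * c) * r ^ p)) := by
                apply mul_le_mul_of_nonneg_right (le_max_right _ _) (by positivity)
            _ = _ := by ring
  · set s := r - βb with hsdef
    have hs : 0 < s := by simp [hsdef]; linarith
    have hsr : s + βb = r := by ring
    have hset : {x | r ≤ |f x - ∫ y, f y ∂μ|} = {x | s + βb ≤ |f x - ∫ y, f y ∂μ|} := by
      rw [hsr]
    rw [hset]
    calc (μ {x | s + βb ≤ |f x - ∫ y, f y ∂μ|}).toReal ≤ C * Real.exp (-c * s ^ p) :=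
        htail s hs
      _ ≤ max C 1 * Real.exp (cp ^ p * C ^ p) * Real.exp (-(min 1 (2 ^ (1 - p)) * c) * r ^ p) := by
          have hexp : Real.exp (-c * s ^ p) ≤
              Real.exp (cp ^ p * C ^ p) * Real.exp (-(min 1 (2 ^ (1 - p)) * c) * r ^ p) := by
            rw [← Real.exp_add]
            apply Real.exp_le_exp.2
            have haux : min 1 (2 ^ (1 - p)) * (s + βb) ^ p ≤ s ^ p + βb ^ p :=
              aux_min_rpow hs.le hβb0 hp
            rw [hsr] at haux
            nlinarith [mul_le_mul_of_nonneg_left haux hc.le]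
          calc C * Real.exp (-c * s ^ p)
              ≤ max C 1 * (Real.exp (cp ^ p * C ^ p) * Real.exp (-(min 1 (2 ^ (1 - p)) * c) * r ^ p)) :=
                mul_le_mul (le_max_left _ _) hexp (Real.exp_nonneg _) (by positivity)
            _ = _ := by ring
end
end

section
/- Let (aₖ)ₖ≥0 be a sequence in [1/2, 1] and λ, ε > 0 with λ ε² = 2, such that 1 − a_{k+1} ≤ (1 − aₖ)/(1 + λε²/2) for all k ≥ 0, with a₀ ≥ 1/2. Then 1 − aₖ ≤ 2^{−(k+1)} = e^{−(k+1) log 2} for all k ≥ 0. Consequently, if for a closed Finsler metric measure manifold with m(M) = 1 one has that for every Borel A with m(A) ≥ 1/2 the iterated ε-neighborhoods Aₖ = B⁻(A_{k−1}, ε) (A₀ = A) satisfy this recursion with λ = λ₁(M), then for every r > 0, 1 − m(B⁻(A, r)) ≤ e^{−r √(λ₁(M)) (log 2)/√2}. -/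
open MeasureTheory Real Set Filter

noncomputable section

lemma geo_rec (b : ℕ → ℝ) (h0 : 1 / 2 ≤ b 0)
    (h : ∀ k, 1 - b (k + 1) ≤ (1 - b k) / 2) :
    ∀ k, 1 - b k ≤ (1 / 2 : ℝ) ^ (k + 1) := by
  intro k
  induction k with
  | zero => simpa using by linarith [h0]
  | succ n ih =>
    calc 1 - b (n + 1) ≤ (1 - b n) / 2 := h n
    _ ≤ (1 / 2 : ℝ) ^ (n + 1) / 2 := by linarith
    _ = (1 / 2 : ℝ) ^ (n + 2) := by ring

theorem iteration_and_exponential_concentration {M : Type*} [MeasurableSpace M]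
    (d : M → M → ℝ) (hd : IsIrrevMetric d)
    (m : Measure M) [IsProbabilityMeasure m]
    (lam ε : ℝ) (hlam : 0 < lam) (hε : 0 < ε) (hlamEps : lam * ε ^ 2 = 2)
    (a : ℕ → ℝ) (ha : ∀ k, a k ∈ Icc (1 / 2 : ℝ) 1)
    (hrec : ∀ k, 1 - a (k + 1) ≤ (1 - a k) / (1 + lam * ε ^ 2 / 2)) :
    (∀ k, 1 - a k ≤ (1 / 2 : ℝ) ^ (k + 1)) ∧
    (∀ A : Set M, MeasurableSet A → 1 / 2 ≤ (m A).toReal →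
      ∀ Ak : ℕ → Set M, Ak 0 = A → (∀ k, Ak (k + 1) = Bminus d (Ak k) ε) →
        (∀ k, 1 / 2 ≤ (m (Ak k)).toReal) →
        (∀ k, 1 - (m (Ak (k + 1))).toReal ≤
          (1 - (m (Ak k)).toReal) / (1 + lam * ε ^ 2 / 2)) →
        ∀ r > 0, 1 - (m (Bminus d A r)).toReal ≤
          Real.exp (-r * Real.sqrt lam * (Real.log 2 / Real.sqrt 2))) := by
  obtain ⟨hd0, hdiag, htri⟩ := hd
  have h2 : (1 + lam * ε ^ 2 / 2) = 2 := by rw [hlamEps]; norm_num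
  constructor
  · exact geo_rec a (ha 0).1 (fun k => by simpa [h2] using hrec k)
  · intro A hA hA2 Ak hAk0 hAkS hAkhalf hAkrec r hr
    have hbound := geo_rec (fun k => (m (Ak k)).toReal) (hAkhalf 0)
      (fun k => by simpa [h2] using hAkrec k)
    -- Ak k ⊆ Bminus d A s for any s > k * ε
    have hsub : ∀ k : ℕ, ∀ s : ℝ, (k : ℝ) * ε < s → Ak k ⊆ Bminus d A s := by
      intro k
      induction k with
      | zero =>
        intro s hs x hx
        rw [hAk0] at hx
        exact ⟨x, hx, by rw [(hdiag x x).mpr rfl]; simpa using hs⟩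
      | succ n ih =>
        intro s hs x hx
        rw [hAkS n] at hx
        obtain ⟨z, hz, hdz⟩ := hx
        have hz' : z ∈ Bminus d A (s - ε) :=
          ih (s - ε) (by push_cast at hs; linarith) hz
        obtain ⟨w, hw, hdw⟩ := hz'
        exact ⟨w, hw, by linarith [htri x z w]⟩
    set n := ⌈r / ε⌉₊ with hn
    have hrε : 0 < r / ε := div_pos hr hε
    have hn1 : 1 ≤ n := Nat.one_le_ceil_iff.mpr hrε
    have hle : r / ε ≤ (n : ℝ) := Nat.le_ceil _
    have hklt : ((n - 1 : ℕ) : ℝ) * ε < r := by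
      have h1 : (n : ℝ) < r / ε + 1 := Nat.ceil_lt_add_one hrε.le
      have h2 : ((n - 1 : ℕ) : ℝ) = (n : ℝ) - 1 := by
        push_cast [Nat.cast_sub hn1]; ring
      have h3 : ((n : ℝ) - 1) * ε < r := by
        have h4 : r / ε * ε = r := div_mul_cancel₀ r hε.ne'
        nlinarith
      rw [h2]; exact h3
    have hmono : 1 - (m (Bminus d A r)).toReal ≤ 1 - (m (Ak (n - 1))).toReal := by
      have := ENNReal.toReal_mono (measure_ne_top m _)
        (measure_mono (hsub (n - 1) r hklt))
      linarith
    have hsucc : n - 1 + 1 = n := Nat.succ_pred_eq_of_pos hn1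
    have hb2 : 1 - (m (Ak (n - 1))).toReal ≤ (1 / 2 : ℝ) ^ n := by
      have := hbound (n - 1)
      rwa [hsucc] at this
    have hexp : (1 / 2 : ℝ) ^ n = Real.exp (-(n : ℝ) * Real.log 2) := by
      rw [show (-(n : ℝ) * Real.log 2) = (n : ℝ) * (-Real.log 2) by ring,
        Real.exp_nat_mul, Real.exp_neg, Real.exp_log two_pos]
      norm_num
    have hεl : ε * Real.sqrt lam = Real.sqrt 2 := by
      rw [← hlamEps, mul_comm lam, Real.sqrt_mul (sq_nonneg ε), Real.sqrt_sq hε.le]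
    have hslam : 0 < Real.sqrt lam := Real.sqrt_pos.mpr hlam
    have hkey : -r * Real.sqrt lam * (Real.log 2 / Real.sqrt 2) = -(r / ε) * Real.log 2 := by
      rw [← hεl]
      field_simp
    have hlog2 : 0 ≤ Real.log 2 := Real.log_nonneg one_le_two
    have hfin : Real.exp (-(n : ℝ) * Real.log 2) ≤
        Real.exp (-r * Real.sqrt lam * (Real.log 2 / Real.sqrt 2)) := by
      apply Real.exp_le_exp.mpr
      rw [hkey]
      nlinarith
    linarith [hexp ▸ hb2]
end
end
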